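/- arXiv:1512.03198 — 3 statements merged into one kernel-verified Lean document; each statement's English description precedes it below -/
import Mathlib

section
/- Let I : (0,1] → (0,∞) be continuous and nondecreasing, L = ∫_0^1 dr/I(r) ∈ (0,∞], and M : [0,L) → (0,1] the function determined by ∫_{M(t)}^1 dr/I(r) = t. Let m ∈ ℕ, m ≥ 2, and let f : (0,1) → [0,∞) be measurable with H_I f(t) < ∞ for every t ∈ (0,1). Define v : (0,L) → [0,∞) by v(t) = H_I^m f(M(t)). Then for every k ∈ ℕ with 1 ≤ k ≤ m−1, the function v is k-times continuously differentiable on (0,L) and its k-th derivative satisfies v^{(k)}(t) = H_I^{m−k} f(M(t)) for every t ∈ (0,L). -/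
open MeasureTheory ENNReal NNReal

/-- `L = ∫_0^1 dr / I(r)`, with values in `(0,∞]`. -/
noncomputable def Lint (I : ℝ → ℝ) : ℝ≥0∞ :=
  ∫⁻ r in Set.Ioo (0:ℝ) 1, ENNReal.ofReal (1 / I r)

/-- The Lebesgue measure of the unit ball in `ℝ^d`. -/
noncomputable def omegaBall (d : ℕ) : ℝ :=
  (volume (Metric.ball (0 : EuclideanSpace ℝ (Fin d)) 1)).toReal

/-- The real-valued Hardy-type operator `H_I g (t) = ∫_t^1 g(r)/I(r) dr`. -/
noncomputable def HIr (I : ℝ → ℝ) (g : ℝ → ℝ) : ℝ → ℝ :=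
  fun t => ∫ r in Set.Ioo t 1, g r / I r

open Set Filter

/-!
Since `∫_{M(t)}^1 dr / I(r) = t`, the inverse function theorem gives `M' = -I ∘ M`, while the
fundamental theorem of calculus gives `(H_I g)' = -g / I` wherever `g` is continuous. The factors
`I` cancel: `d/dt H_I g (M t) = g (M t)`. Every iterate `H_I^j f` with `j ≥ 1` is continuous on
`(0,1)`, and `H_I^j f / I` stays integrable near `1`, so the identity applies to all of them and
`v^{(k)} = H_I^{m-k} f ∘ M` follows by induction on `k`. Continuity of `M`, needed for the inverse
function theorem, holds because `1 / I ≥ 1 / I(1)` makes `M` an `I(1)`-Lipschitz function.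
-/

section Chain

variable {u : ℕ → ℝ → ℝ} {S : Set ℝ}

lemma contDiffOn_of_hasDerivAt_chain (hS : IsOpen S) (hu₀ : ContinuousOn (u 0) S)
    (hu : ∀ j, ∀ t ∈ S, HasDerivAt (u (j + 1)) (u j t) t) (j k : ℕ) :
    ContDiffOn ℝ (k : ℕ∞) (u (j + k)) S := by
  induction k with
  | zero =>
    refine contDiffOn_zero.2 ?_
    cases j with
    | zero => exact hu₀
    | succ j => exact fun t ht => (hu j t ht).continuousAt.continuousWithinAt
  | succ k ih =>
    rw [show (((k + 1 : ℕ) : ℕ∞) : WithTop ℕ∞) = (k : ℕ∞) + 1 by push_cast; rfl,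
      contDiffOn_succ_iff_deriv_of_isOpen hS]
    exact ⟨fun t ht => (hu _ t ht).differentiableAt.differentiableWithinAt, by simp,
      ih.congr fun t ht => (hu _ t ht).deriv⟩

lemma iteratedDeriv_eq_of_hasDerivAt_chain (hS : IsOpen S)
    (hu : ∀ j, ∀ t ∈ S, HasDerivAt (u (j + 1)) (u j t) t) (j k : ℕ) :
    ∀ t ∈ S, iteratedDeriv k (u (j + k)) t = u j t := by
  induction k generalizing j with
  | zero => exact fun t _ => rfl
  | succ k ih =>
    intro t ht
    rw [iteratedDeriv_succ, show j + (k + 1) = j + 1 + k by omega,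
      EventuallyEq.deriv_eq (eventually_of_mem (hS.mem_nhds ht) (ih (j + 1)))]
    exact (hu j t ht).deriv

end Chain

lemma hasDerivAt_intervalIntegral_left_of_continuousOn {h : ℝ → ℝ} {s : Set ℝ} {x b : ℝ}
    (hint : IntervalIntegrable h volume x b) (hs : IsOpen s) (hcont : ContinuousOn h s)
    (hx : x ∈ s) : HasDerivAt (fun y => ∫ r in y..b, h r) (-h x) x :=
  intervalIntegral.integral_hasDerivAt_left hint (hcont.stronglyMeasurableAtFilter hs x hx)
    (hcont.continuousAt (hs.mem_nhds hx))

section HardyOperator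

variable {I : ℝ → ℝ}

lemma HIr_eq_intervalIntegral (g : ℝ → ℝ) {t : ℝ} (ht : t ≤ 1) :
    HIr I g t = ∫ r in t..1, g r / I r := by
  rw [intervalIntegral.integral_of_le ht, integral_Ioc_eq_integral_Ioo]
  rfl

lemma continuousOn_HIr_Icc {g : ℝ → ℝ} {x : ℝ} (hx : x ≤ 1)
    (hint : IntegrableOn (fun r => g r / I r) (Ioo x 1)) :
    ContinuousOn (HIr I g) (Icc x 1) := by
  have hint' : IntegrableOn (fun r => g r / I r) (uIcc x 1) := by
    rw [uIcc_of_le hx]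
    exact (integrableOn_Icc_iff_integrableOn_Ioo).2 hint
  have hprim := intervalIntegral.continuousOn_primitive_interval_left hint'
  rw [uIcc_of_le hx] at hprim
  exact hprim.congr fun y hy => HIr_eq_intervalIntegral g hy.2

lemma continuousAt_HIr {g : ℝ → ℝ}
    (hint : ∀ x ∈ Ioo (0:ℝ) 1, IntegrableOn (fun r => g r / I r) (Ioo x 1))
    {y : ℝ} (hy : y ∈ Ioo (0:ℝ) 1) : ContinuousAt (HIr I g) y :=
  (continuousOn_HIr_Icc (by linarith [hy.2]) (hint (y / 2) ⟨by linarith [hy.1], by linarith [hy.2]⟩)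
    ).continuousAt (Icc_mem_nhds (by linarith [hy.1]) hy.2)

lemma integrableOn_HIr_div (hIc : ContinuousOn I (Ioc (0:ℝ) 1))
    (hIpos : ∀ t ∈ Ioc (0:ℝ) 1, 0 < I t) {g : ℝ → ℝ}
    (hint : ∀ x ∈ Ioo (0:ℝ) 1, IntegrableOn (fun r => g r / I r) (Ioo x 1)) :
    ∀ x ∈ Ioo (0:ℝ) 1, IntegrableOn (fun r => HIr I g r / I r) (Ioo x 1) := by
  intro x hx
  have hsub : Icc x 1 ⊆ Ioc 0 1 := fun r hr => ⟨hx.1.trans_le hr.1, hr.2⟩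
  exact ((continuousOn_HIr_Icc hx.2.le (hint x hx)).div (hIc.mono hsub)
    fun r hr => (hIpos r (hsub hr)).ne').integrableOn_Icc.mono_set Ioo_subset_Icc_self

lemma integrableOn_iterate_HIr_div (hIc : ContinuousOn I (Ioc (0:ℝ) 1))
    (hIpos : ∀ t ∈ Ioc (0:ℝ) 1, 0 < I t) {f : ℝ → ℝ}
    (hint : ∀ x ∈ Ioo (0:ℝ) 1, IntegrableOn (fun r => f r / I r) (Ioo x 1)) (j : ℕ) :
    ∀ x ∈ Ioo (0:ℝ) 1, IntegrableOn (fun r => (HIr I)^[j] f r / I r) (Ioo x 1) := by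
  induction j with
  | zero => exact hint
  | succ j ih =>
    simp only [Function.iterate_succ_apply']
    exact integrableOn_HIr_div hIc hIpos ih

lemma hasDerivAt_HIr (hIc : ContinuousOn I (Ioc (0:ℝ) 1))
    (hIpos : ∀ t ∈ Ioc (0:ℝ) 1, 0 < I t) {G : ℝ → ℝ} (hG : ContinuousOn G (Ioo (0:ℝ) 1))
    {x : ℝ} (hx : x ∈ Ioo (0:ℝ) 1) (hint : IntegrableOn (fun r => G r / I r) (Ioo x 1)) :
    HasDerivAt (HIr I G) (-(G x / I x)) x := by
  have hcont : ContinuousOn (fun r => G r / I r) (Ioo 0 1) :=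
    hG.div (hIc.mono Ioo_subset_Ioc_self) fun r hr => (hIpos r (Ioo_subset_Ioc_self hr)).ne'
  refine (hasDerivAt_intervalIntegral_left_of_continuousOn
    ((intervalIntegrable_iff_integrableOn_Ioo_of_le hx.2.le).2 hint) isOpen_Ioo hcont hx
    ).congr_of_eventuallyEq ?_
  filter_upwards [Iio_mem_nhds hx.2] with y hy using HIr_eq_intervalIntegral G hy.le

lemma hasDerivAt_HIr_comp (hIc : ContinuousOn I (Ioc (0:ℝ) 1))
    (hIpos : ∀ t ∈ Ioc (0:ℝ) 1, 0 < I t) {G : ℝ → ℝ} (hG : ContinuousOn G (Ioo (0:ℝ) 1))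
    {M : ℝ → ℝ} {t : ℝ} (hMt : M t ∈ Ioo (0:ℝ) 1)
    (hint : IntegrableOn (fun r => G r / I r) (Ioo (M t) 1)) (hM : HasDerivAt M (-I (M t)) t) :
    HasDerivAt (fun s => HIr I G (M s)) (G (M t)) t := by
  have hI : I (M t) ≠ 0 := (hIpos _ (Ioo_subset_Ioc_self hMt)).ne'
  have hcomp := (hasDerivAt_HIr hIc hIpos hG hMt hint).comp t hM
  rwa [neg_mul_neg, div_mul_cancel₀ _ hI] at hcomp

end HardyOperator

section InverseOfIntegral

variable {I : ℝ → ℝ}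

lemma intervalIntegrable_one_div (hIc : ContinuousOn I (Ioc (0:ℝ) 1))
    (hIpos : ∀ t ∈ Ioc (0:ℝ) 1, 0 < I t) {a b : ℝ} (ha : a ∈ Ioc (0:ℝ) 1)
    (hb : b ∈ Ioc (0:ℝ) 1) : IntervalIntegrable (fun r => 1 / I r) volume a b :=
  ((continuousOn_const.div hIc fun r hr => (hIpos r hr).ne').mono
    (ordConnected_Ioc.uIcc_subset ha hb)).intervalIntegrable

lemma abs_sub_le_mul_abs_integral_one_div (hIc : ContinuousOn I (Ioc (0:ℝ) 1))
    (hImono : MonotoneOn I (Ioc (0:ℝ) 1)) (hIpos : ∀ t ∈ Ioc (0:ℝ) 1, 0 < I t) {a b : ℝ}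
    (ha : a ∈ Ioc (0:ℝ) 1) (hb : b ∈ Ioc (0:ℝ) 1) :
    |b - a| ≤ I 1 * |∫ r in a..b, 1 / I r| := by
  wlog hab : a ≤ b generalizing a b with H
  · rw [abs_sub_comm, intervalIntegral.integral_symm, abs_neg]
    exact H hb ha (le_of_not_ge hab)
  have h1 : (1:ℝ) ∈ Ioc 0 1 := ⟨one_pos, le_rfl⟩
  have hI1 : 0 < I 1 := hIpos 1 h1
  have hsub : Icc a b ⊆ Ioc 0 1 := fun r hr => ⟨ha.1.trans_le hr.1, hr.2.trans hb.2⟩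
  have hle : ∫ _ in a..b, 1 / I 1 ≤ ∫ r in a..b, 1 / I r :=
    intervalIntegral.integral_mono_on hab intervalIntegrable_const
      (intervalIntegrable_one_div hIc hIpos ha hb) fun r hr =>
        one_div_le_one_div_of_le (hIpos r (hsub hr)) (hImono (hsub hr) h1 (hsub hr).2)
  rw [intervalIntegral.integral_const, smul_eq_mul] at hle
  calc |b - a| = I 1 * ((b - a) * (1 / I 1)) := by
        rw [abs_of_nonneg (sub_nonneg.2 hab)]; field_simp
    _ ≤ I 1 * |∫ r in a..b, 1 / I r| := by gcongr; exact hle.trans (le_abs_self _)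

variable {M : ℝ → ℝ} {S : Set ℝ}

lemma lipschitzOnWith_of_integral_eq (hIc : ContinuousOn I (Ioc (0:ℝ) 1))
    (hImono : MonotoneOn I (Ioc (0:ℝ) 1)) (hIpos : ∀ t ∈ Ioc (0:ℝ) 1, 0 < I t)
    (hM : ∀ t ∈ S, M t ∈ Ioc (0:ℝ) 1 ∧ ∫ r in (M t)..1, 1 / I r = t) :
    LipschitzOnWith (Real.toNNReal (I 1)) M S := by
  refine LipschitzOnWith.of_dist_le_mul fun s hs t ht => ?_
  obtain ⟨hMs, hJs⟩ := hM s hs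
  obtain ⟨hMt, hJt⟩ := hM t ht
  have hsplit := intervalIntegral.integral_add_adjacent_intervals
    (intervalIntegrable_one_div hIc hIpos hMt hMs) (intervalIntegrable_one_div hIc hIpos hMs
      (b := 1) ⟨one_pos, le_rfl⟩)
  have hts : ∫ r in (M t)..(M s), 1 / I r = t - s := by linarith
  rw [Real.dist_eq, Real.dist_eq, Real.coe_toNNReal _ (hIpos 1 ⟨one_pos, le_rfl⟩).le,
    abs_sub_comm s, ← hts]
  exact abs_sub_le_mul_abs_integral_one_div hIc hImono hIpos hMt hMs

lemma mem_Ioo_of_integral_eq {x t : ℝ} (hx : x ∈ Ioc (0:ℝ) 1)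
    (hxt : ∫ r in x..1, 1 / I r = t) (ht : 0 < t) : x ∈ Ioo (0:ℝ) 1 := by
  refine ⟨hx.1, hx.2.lt_of_ne ?_⟩
  rintro rfl
  rw [intervalIntegral.integral_same] at hxt
  linarith

lemma hasDerivAt_of_integral_eq (hIc : ContinuousOn I (Ioc (0:ℝ) 1))
    (hImono : MonotoneOn I (Ioc (0:ℝ) 1)) (hIpos : ∀ t ∈ Ioc (0:ℝ) 1, 0 < I t) (hS : IsOpen S)
    (hM : ∀ t ∈ S, M t ∈ Ioc (0:ℝ) 1 ∧ ∫ r in (M t)..1, 1 / I r = t) {t : ℝ} (ht : t ∈ S)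
    (hMt : M t ∈ Ioo (0:ℝ) 1) : HasDerivAt M (-I (M t)) t := by
  have hJ : HasDerivAt (fun x => ∫ r in x..1, 1 / I r) (-(1 / I (M t))) (M t) :=
    hasDerivAt_intervalIntegral_left_of_continuousOn
      (intervalIntegrable_one_div hIc hIpos (Ioo_subset_Ioc_self hMt) ⟨one_pos, le_rfl⟩)
      isOpen_Ioo ((continuousOn_const.div hIc fun r hr => (hIpos r hr).ne').mono
        Ioo_subset_Ioc_self) hMt
  have hI : I (M t) ≠ 0 := (hIpos _ (Ioo_subset_Ioc_self hMt)).ne'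
  simpa using hJ.of_local_left_inverse
    ((lipschitzOnWith_of_integral_eq hIc hImono hIpos hM).continuousOn.continuousAt
      (hS.mem_nhds ht)) (by simpa using hI)
    (eventually_of_mem (hS.mem_nhds ht) fun s hs => (hM s hs).2)

end InverseOfIntegral

theorem derivatives_of_extremal_function_general (I : ℝ → ℝ)
    (hIc : ContinuousOn I (Set.Ioc (0:ℝ) 1))
    (hImono : MonotoneOn I (Set.Ioc (0:ℝ) 1))
    (hIpos : ∀ t ∈ Set.Ioc (0:ℝ) 1, 0 < I t)
    (M : ℝ → ℝ)
    (hM : ∀ t : ℝ, 0 ≤ t → ENNReal.ofReal t < Lint I →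
      M t ∈ Set.Ioc (0:ℝ) 1 ∧ ∫ r in (M t)..1, 1 / I r = t)
    (m : ℕ)
    (f : ℝ → ℝ)
    (hfint : ∀ t ∈ Set.Ioo (0:ℝ) 1,
      IntegrableOn (fun r => f r / I r) (Set.Ioo t 1) volume) :
    ∀ k : ℕ, 1 ≤ k → k ≤ m - 1 →
      ContDiffOn ℝ (k : ℕ∞) (fun t => (HIr I)^[m] f (M t))
        {t : ℝ | 0 < t ∧ ENNReal.ofReal t < Lint I} ∧
      ∀ t : ℝ, 0 < t → ENNReal.ofReal t < Lint I →
        iteratedDeriv k (fun t => (HIr I)^[m] f (M t)) t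
          = (HIr I)^[m - k] f (M t) := by
  intro k hk1 hk2
  set S := {t : ℝ | 0 < t ∧ ENNReal.ofReal t < Lint I}
  have hS : IsOpen S :=
    (isOpen_lt continuous_const continuous_id).inter (isOpen_Iio.preimage continuous_ofReal)
  have hMS : ∀ t ∈ S, M t ∈ Ioc (0:ℝ) 1 ∧ ∫ r in (M t)..1, 1 / I r = t :=
    fun t ht => hM t ht.1.le ht.2
  have hMt : ∀ t ∈ S, M t ∈ Ioo (0:ℝ) 1 :=
    fun t ht => mem_Ioo_of_integral_eq (hMS t ht).1 (hMS t ht).2 ht.1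
  have hM' : ∀ t ∈ S, HasDerivAt M (-I (M t)) t :=
    fun t ht => hasDerivAt_of_integral_eq hIc hImono hIpos hS hMS ht (hMt t ht)
  set u : ℕ → ℝ → ℝ := fun j t => (HIr I)^[j + 1] f (M t)
  have hu₀ : ContinuousOn (u 0) S := fun t ht =>
    ((continuousAt_HIr hfint (hMt t ht)).comp (hM' t ht).continuousAt).continuousWithinAt
  have hu : ∀ j, ∀ t ∈ S, HasDerivAt (u (j + 1)) (u j t) t := by
    intro j t ht
    have hg := integrableOn_iterate_HIr_div hIc hIpos hfint j
    simp only [u, Function.iterate_succ_apply']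
    exact hasDerivAt_HIr_comp hIc hIpos (fun y hy => (continuousAt_HIr hg hy).continuousWithinAt)
      (hMt t ht) (integrableOn_HIr_div hIc hIpos hg _ (hMt t ht)) (hM' t ht)
  obtain ⟨j, rfl⟩ : ∃ j, m = j + k + 1 := ⟨m - k - 1, by omega⟩
  refine ⟨contDiffOn_of_hasDerivAt_chain hS hu₀ hu j k, fun t ht0 htL => ?_⟩
  rw [show j + k + 1 - k = j + 1 by omega]
  exact iteratedDeriv_eq_of_hasDerivAt_chain hS hu j k t ⟨ht0, htL⟩

/-- the function `v(t) = H_I^m f (M(t))` is `k`-times continuously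
differentiable on `(0,L)` with `v^{(k)}(t) = H_I^{m-k} f (M(t))`, for `1 ≤ k ≤ m-1`. -/
theorem derivatives_of_extremal_function (I : ℝ → ℝ)
    (hIc : ContinuousOn I (Set.Ioc (0:ℝ) 1))
    (hImono : MonotoneOn I (Set.Ioc (0:ℝ) 1))
    (hIpos : ∀ t ∈ Set.Ioc (0:ℝ) 1, 0 < I t)
    (M : ℝ → ℝ)
    (hM : ∀ t : ℝ, 0 ≤ t → ENNReal.ofReal t < Lint I →
      M t ∈ Set.Ioc (0:ℝ) 1 ∧ ∫ r in (M t)..1, 1 / I r = t)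
    (m : ℕ) (hm : 2 ≤ m)
    (f : ℝ → ℝ) (hf : Measurable f) (hfpos : ∀ t ∈ Set.Ioo (0:ℝ) 1, 0 ≤ f t)
    (hfint : ∀ t ∈ Set.Ioo (0:ℝ) 1,
      IntegrableOn (fun r => f r / I r) (Set.Ioo t 1) volume) :
    ∀ k : ℕ, 1 ≤ k → k ≤ m - 1 →
      ContDiffOn ℝ (k : ℕ∞) (fun t => (HIr I)^[m] f (M t))
        {t : ℝ | 0 < t ∧ ENNReal.ofReal t < Lint I} ∧
      ∀ t : ℝ, 0 < t → ENNReal.ofReal t < Lint I →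
        iteratedDeriv k (fun t => (HIr I)^[m] f (M t)) t
          = (HIr I)^[m - k] f (M t) :=
  derivatives_of_extremal_function_general I hIc hImono hIpos M hM m f hfint
end

section
/- Let m ∈ ℕ, m ≥ 2, let I be a positive nondecreasing function on (0,1), and let N be a rearrangement-invariant function norm on (0,1). Suppose there exists a constant C > 0 such that (∫_0^t ds/I(s))^m ≤ C · N(χ_{(0,t)}) for every t ∈ (0,1). Then ∫_0^1 ds/I(s) < ∞ and there exists a constant C' > 0 such that sup_{t∈(0,1)} g**(t) (∫_0^t ds/I(s))^m ≤ C' · N(g) for every measurable function g on (0,1), where g** denotes the maximal function of the decreasing rearrangement of g. -/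
/-!
Raising the fundamental estimate to the power `1/m` and using
`N(χ_(0,t)) ≤ N(χ_(0,1)) < ∞` bounds all partial integrals `∫_0^t 1/I` uniformly, so
`∫_0^1 1/I < ∞`. The second claim then reduces to `g**(t) N(χ_(0,t)) ≤ N(g) = N(g*)`. Averaging the
`n + 1` cyclic rotations of `[0, t)` by multiples of `t/(n+1)` turns `g*` into a function of norm at
most `N(g*)`; since `g*` is decreasing, this average dominates on `(0, t)` the mean of `g*` over
`(t/(n+1), t)`, and letting `n → ∞` gives the claim.
-/

open MeasureTheory ENNReal NNReal

/-- The Hardy-type operator `H_I g (t) = ∫_t^1 g(r)/I(r) dr`, acting on nonnegative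
measurable functions on `(0,1)`, realized as `[0,∞]`-valued functions on `ℝ`. -/
noncomputable def HI (I : ℝ → ℝ) (g : ℝ → ℝ≥0∞) : ℝ → ℝ≥0∞ :=
  fun t => ∫⁻ r in Set.Ioo t 1, g r / ENNReal.ofReal (I r)

/-- A rearrangement-invariant function norm on `(0,1)`. -/
structure RINorm where
  N : (ℝ → ℝ≥0∞) → ℝ≥0∞
  eq_zero_iff : ∀ f : ℝ → ℝ≥0∞, Measurable f →
    (N f = 0 ↔ ∀ᵐ t ∂(volume.restrict (Set.Ioo (0:ℝ) 1)), f t = 0)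
  smul_eq : ∀ f : ℝ → ℝ≥0∞, Measurable f → ∀ c : ℝ≥0,
    N (fun t => (c : ℝ≥0∞) * f t) = (c : ℝ≥0∞) * N f
  add_le : ∀ f g : ℝ → ℝ≥0∞, Measurable f → Measurable g →
    N (fun t => f t + g t) ≤ N f + N g
  mono : ∀ f g : ℝ → ℝ≥0∞, Measurable f → Measurable g →
    (∀ᵐ t ∂(volume.restrict (Set.Ioo (0:ℝ) 1)), f t ≤ g t) → N f ≤ N g
  fatou : ∀ (f : ℕ → ℝ → ℝ≥0∞) (g : ℝ → ℝ≥0∞),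
    (∀ j, Measurable (f j)) → Measurable g →
    (∀ j t, f j t ≤ f (j + 1) t) →
    (∀ᵐ t ∂(volume.restrict (Set.Ioo (0:ℝ) 1)), (⨆ j, f j t) = g t) →
    (⨆ j, N (f j)) = N g
  chi_lt_top : N ((Set.Ioo (0:ℝ) 1).indicator fun _ => 1) < ⊤
  lintegral_le : ∃ c : ℝ≥0, 0 < c ∧ ∀ f : ℝ → ℝ≥0∞, Measurable f →
    (∫⁻ t in Set.Ioo (0:ℝ) 1, f t) ≤ (c : ℝ≥0∞) * N f
  equimeasurable : ∀ f g : ℝ → ℝ≥0∞, Measurable f → Measurable g →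
    (∀ lam : ℝ≥0∞, 0 < lam →
      volume {t ∈ Set.Ioo (0:ℝ) 1 | lam < f t}
        = volume {t ∈ Set.Ioo (0:ℝ) 1 | lam < g t}) →
    N f = N g

/-- The decreasing rearrangement on `(0,1)` of a `[0,∞]`-valued function. -/
noncomputable def decRearr (g : ℝ → ℝ≥0∞) (s : ℝ) : ℝ≥0∞ :=
  sInf {lam : ℝ≥0∞ | volume {t ∈ Set.Ioo (0:ℝ) 1 | lam < g t} ≤ ENNReal.ofReal s}

open Set

theorem setLIntegral_Ioo_le_of_forall_lt {f : ℝ → ℝ≥0∞} {a b : ℝ} {R : ℝ≥0∞}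
    (h : ∀ t ∈ Ioo a b, ∫⁻ x in Ioo a t, f x ≤ R) : ∫⁻ x in Ioo a b, f x ≤ R := by
  rcases le_or_gt b a with hba | hab
  · simp [Ioo_eq_empty_of_le hba]
  obtain ⟨u, hu_mono, hu_mem, hu_lim⟩ := exists_seq_strictMono_tendsto' hab
  have hunion : ⋃ n, Ioo a (u n) = Ioo a b := by
    refine Subset.antisymm (iUnion_subset fun n => Ioo_subset_Ioo_right (hu_mem n).2.le) ?_
    intro x hx
    obtain ⟨n, hn⟩ := (hu_lim.eventually (lt_mem_nhds hx.2)).exists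
    exact mem_iUnion.2 ⟨n, hx.1, hn⟩
  have hmono : Monotone fun n => Ioo a (u n) :=
    fun _ _ hmn => Ioo_subset_Ioo_right (hu_mono.monotone hmn)
  rw [← hunion, setLIntegral_iUnion_of_directed f hmono.directed_le]
  exact iSup_le fun n => h (u n) (hu_mem n)

theorem lintegral_Ioc_le_sum_of_antitone {f : ℝ → ℝ≥0∞} (hf : Antitone f) (a : ℝ) {δ : ℝ}
    (hδ : 0 ≤ δ) (M : ℕ) :
    ∫⁻ y in Ioc a (a + M * δ), f y ≤ ENNReal.ofReal δ * ∑ j ∈ Finset.range M, f (a + j * δ) := by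
  induction M with
  | zero => simp
  | succ M ih =>
    have hstep : a + (M + 1 : ℕ) * δ = a + M * δ + δ := by push_cast; ring
    have hM : a ≤ a + M * δ := le_add_of_nonneg_right (by positivity)
    rw [hstep, ← Ioc_union_Ioc_eq_Ioc hM (le_add_of_nonneg_right hδ),
      Finset.sum_range_succ, mul_add]
    refine (lintegral_union_le _ _ _).trans (add_le_add ih ?_)
    calc ∫⁻ y in Ioc (a + M * δ) (a + M * δ + δ), f y
        ≤ ∫⁻ _ in Ioc (a + M * δ) (a + M * δ + δ), f (a + M * δ) :=
          setLIntegral_mono measurable_const fun y hy => hf hy.1.le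
      _ = ENNReal.ofReal δ * f (a + M * δ) := by
          rw [setLIntegral_const, Real.volume_Ioc, add_sub_cancel_left, mul_comm]

theorem measure_sep_lt_le_of_forall_gt {α : Type*} [MeasurableSpace α] (μ : Measure α)
    (s : Set α) (g : α → ℝ≥0∞) {lam c : ℝ≥0∞} (h : ∀ u > lam, μ {x ∈ s | u < g x} ≤ c) :
    μ {x ∈ s | lam < g x} ≤ c := by
  rcases eq_or_ne lam ⊤ with rfl | hlam
  · simp
  obtain ⟨u, hu_anti, hu_mem, hu_lim⟩ := exists_seq_strictAnti_tendsto' hlam.lt_top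
  have hunion : {x ∈ s | lam < g x} = ⋃ n, {x ∈ s | u n < g x} := by
    ext x
    simp only [mem_ofPred_eq, mem_iUnion]
    refine ⟨fun hx => ?_, fun ⟨n, hs, hn⟩ => ⟨hs, (hu_mem n).1.trans hn⟩⟩
    obtain ⟨n, hn⟩ := (hu_lim.eventually (gt_mem_nhds hx.2)).exists
    exact ⟨n, hx.1, hn⟩
  have hmono : Monotone fun n => {x ∈ s | u n < g x} :=
    fun _ _ hmn _ hx => ⟨hx.1, (hu_anti.antitone hmn).trans_lt hx.2⟩
  rw [hunion, hmono.measure_iUnion]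
  exact iSup_le fun n => h (u n) (hu_mem n).1

theorem decRearr_antitone (g : ℝ → ℝ≥0∞) : Antitone (decRearr g) :=
  fun _ _ hab => sInf_le_sInf fun _ hl => hl.trans (ENNReal.ofReal_le_ofReal hab)

theorem measurable_decRearr (g : ℝ → ℝ≥0∞) : Measurable (decRearr g) :=
  (decRearr_antitone g).measurable

theorem lt_decRearr_iff (g : ℝ → ℝ≥0∞) (lam : ℝ≥0∞) (s : ℝ) :
    lam < decRearr g s ↔ ENNReal.ofReal s < volume {x ∈ Ioo (0:ℝ) 1 | lam < g x} := by
  refine not_iff_not.1 ?_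
  simp only [not_lt]
  refine ⟨fun h => measure_sep_lt_le_of_forall_gt _ _ _ fun u hu => ?_, fun h => sInf_le h⟩
  obtain ⟨v, hv, hvu⟩ := sInf_lt_iff.1 (h.trans_lt hu)
  refine le_trans (measure_mono fun x hx => ?_) hv
  exact ⟨hx.1, hvu.trans hx.2⟩

theorem volume_sep_lt_decRearr (g : ℝ → ℝ≥0∞) (lam : ℝ≥0∞) :
    volume {s ∈ Ioo (0:ℝ) 1 | lam < decRearr g s} = volume {x ∈ Ioo (0:ℝ) 1 | lam < g x} := by
  set D := volume {x ∈ Ioo (0:ℝ) 1 | lam < g x}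
  have hD1 : D ≤ 1 := (measure_mono fun x hx => hx.1).trans (by simp)
  have hDtop : D ≠ ⊤ := ne_top_of_le_ne_top one_ne_top hD1
  have hset : {s ∈ Ioo (0:ℝ) 1 | lam < decRearr g s} = Ioo 0 D.toReal := by
    ext s
    simp only [mem_Ioo, lt_decRearr_iff]
    constructor
    · rintro ⟨⟨hs0, -⟩, hsD⟩
      exact ⟨hs0, (ENNReal.ofReal_lt_iff_lt_toReal hs0.le hDtop).1 hsD⟩
    · rintro ⟨hs0, hsD⟩
      have hD1' : D.toReal ≤ 1 := ENNReal.toReal_le_of_le_ofReal zero_le_one (by simpa using hD1)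
      exact ⟨⟨hs0, hsD.trans_le hD1'⟩, (ENNReal.ofReal_lt_iff_lt_toReal hs0.le hDtop).2 hsD⟩
  rw [hset, Real.volume_Ioo, sub_zero, ENNReal.ofReal_toReal hDtop]

noncomputable def cyclicShift (t s x : ℝ) : ℝ :=
  if x ∈ Ico 0 (t - s) then x + s else if x ∈ Ico (t - s) t then x + s - t else x

theorem measurable_cyclicShift (t s : ℝ) : Measurable (cyclicShift t s) :=
  (measurable_add_const s).ite measurableSet_Ico <|
    ((measurable_add_const s).sub_const t).ite measurableSet_Ico measurable_id

theorem cyclicShift_of_add_lt {t s x : ℝ} (hx : 0 ≤ x) (hxs : x + s < t) :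
    cyclicShift t s x = x + s := by
  rw [cyclicShift, if_pos ⟨hx, by linarith⟩]

theorem cyclicShift_of_le_add {t s x : ℝ} (hxt : x < t) (hxs : t ≤ x + s) :
    cyclicShift t s x = x + s - t := by
  rw [cyclicShift, if_neg fun h => by linarith [h.2], if_pos ⟨by linarith, hxt⟩]

theorem volume_Ico_inter_preimage_add_const (a b c : ℝ) (S : Set ℝ) :
    volume (Ico a b ∩ (· + c) ⁻¹' S) = volume (Ico (a + c) (b + c) ∩ S) := by
  rw [← measure_preimage_add_right volume c (Ico (a + c) (b + c) ∩ S), preimage_inter,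
    preimage_add_const_Ico, add_sub_cancel_right, add_sub_cancel_right]

theorem volume_Ico_inter_union_Ico_inter {a b c : ℝ} (P : Set ℝ) {Q : Set ℝ}
    (hQ : MeasurableSet Q) :
    volume ((Ico a b ∩ P) ∪ (Ico b c ∩ Q)) = volume (Ico a b ∩ P) + volume (Ico b c ∩ Q) :=
  measure_union (Ico_disjoint_Ico_same.mono inter_subset_left inter_subset_left)
    (measurableSet_Ico.inter hQ)

/-- The rotation permutes the three pieces `[0, s)`, `[s, t)`, `[t, b)` of `[0, b)` by
translations, so it preserves Lebesgue measure on `[0, b)`. -/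
theorem volume_Ico_inter_preimage_cyclicShift {t s b : ℝ} (hs : 0 ≤ s) (hst : s ≤ t)
    (htb : t ≤ b) {S : Set ℝ} (hS : MeasurableSet S) :
    volume (Ico 0 b ∩ cyclicShift t s ⁻¹' S) = volume (Ico 0 b ∩ S) := by
  have hsplit : Ico 0 b ∩ cyclicShift t s ⁻¹' S
      = ((Ico 0 (t - s) ∩ (· + s) ⁻¹' S) ∪ (Ico (t - s) t ∩ (· + (s - t)) ⁻¹' S))
        ∪ (Ico t b ∩ S) := by
    ext x
    simp only [cyclicShift, mem_inter_iff, mem_preimage, mem_union, mem_Ico]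
    split_ifs <;> grind
  have hdisj : Disjoint ((Ico 0 (t - s) ∩ (· + s) ⁻¹' S) ∪ (Ico (t - s) t ∩ (· + (s - t)) ⁻¹' S))
      (Ico t b ∩ S) :=
    (Ico_disjoint_Ico_same (a := 0)).mono
      (union_subset (inter_subset_left.trans (Ico_subset_Ico_right (by linarith)))
        (inter_subset_left.trans (Ico_subset_Ico_left (by linarith))))
      inter_subset_left
  have hshift : Ico (t - s + (s - t)) (t + (s - t)) = Ico 0 s := by ring_nf
  rw [hsplit, measure_union hdisj (measurableSet_Ico.inter hS),
    volume_Ico_inter_union_Ico_inter _ (hS.preimage (measurable_add_const _)),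
    volume_Ico_inter_preimage_add_const, volume_Ico_inter_preimage_add_const, zero_add,
    sub_add_cancel, hshift, ← Ico_union_Ico_eq_Ico (hs.trans hst) htb, union_inter_distrib_right,
    volume_Ico_inter_union_Ico_inter _ hS, ← Ico_union_Ico_eq_Ico hs hst,
    union_inter_distrib_right, volume_Ico_inter_union_Ico_inter _ hS,
    add_comm (volume (Ico 0 s ∩ S))]

theorem sum_range_cyclicShift_eq (f : ℝ → ℝ≥0∞) {t δ x : ℝ} {K M : ℕ} (hx : x ∈ Ico 0 t)
    (hδ : 0 ≤ δ) (hKM : K ≤ M) (hK : t ≤ x + K * δ) (hbelow : ∀ k < K, x + k * δ < t) :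
    ∑ k ∈ Finset.range M, f (cyclicShift t (k * δ) x)
      = ∑ k ∈ Finset.range K, f (x + k * δ)
        + ∑ j ∈ Finset.range (M - K), f (x + K * δ - t + j * δ) := by
  rw [Finset.range_eq_Ico, ← Finset.sum_Ico_consecutive _ (Nat.zero_le K) hKM,
    ← Finset.range_eq_Ico, Finset.sum_Ico_eq_sum_range]
  congr 1
  · refine Finset.sum_congr rfl fun k hk => ?_
    rw [cyclicShift_of_add_lt hx.1 (hbelow k (Finset.mem_range.1 hk))]
  · refine Finset.sum_congr rfl fun j _ => ?_
    have hge : t ≤ x + ((K + j : ℕ) : ℝ) * δ := by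
      push_cast
      nlinarith [j.cast_nonneg (α := ℝ)]
    rw [cyclicShift_of_le_add hx.2 hge]
    push_cast
    ring_nf

/-- The rotated points `x + kδ` run up to the first one beyond `t` and then wrap around; the two
runs are lower Riemann sums of the antitone `f` over `(x, x + Kδ]` and `(x + Kδ - t, x]`. -/
theorem lintegral_Ioc_le_sum_cyclicShift {f : ℝ → ℝ≥0∞} (hf : Antitone f) {t δ : ℝ} {M : ℕ}
    (hδ : 0 < δ) (hMδ : M * δ = t) {x : ℝ} (hx : x ∈ Ico 0 t) :
    ∫⁻ y in Ioc δ t, f y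
      ≤ ENNReal.ofReal δ * ∑ k ∈ Finset.range M, f (cyclicShift t (k * δ) x) := by
  obtain ⟨K, hK, hbelow⟩ : ∃ K : ℕ, t ≤ x + K * δ ∧ ∀ k < K, x + k * δ < t := by
    classical
    have hex : ∃ K : ℕ, t ≤ x + K * δ := ⟨M, by linarith [hx.1]⟩
    exact ⟨Nat.find hex, Nat.find_spec hex, fun k hk => not_le.1 (Nat.find_min hex hk)⟩
  have hKM : K ≤ M := by
    by_contra! hMK
    linarith [hbelow M hMK, hx.1]
  obtain ⟨x', hx'⟩ : ∃ x', x' = x + K * δ - t := ⟨_, rfl⟩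
  have hx'δ : x' < δ := by
    obtain ⟨K', rfl⟩ : ∃ K', K = K' + 1 :=
      Nat.exists_eq_succ_of_ne_zero fun h0 => by simp [h0] at hK; linarith [hx.2]
    have := hbelow K' (by omega)
    push_cast at hx'
    linarith
  have hx'x : x' ≤ x := by
    have : (K : ℝ) * δ ≤ M * δ := by gcongr
    linarith
  have hx'end : x' + ((M - K : ℕ) : ℝ) * δ = x := by
    rw [Nat.cast_sub hKM]
    linarith
  have hsum := sum_range_cyclicShift_eq f hx hδ.le hKM hK hbelow
  rw [← hx'] at hsum
  calc ∫⁻ y in Ioc δ t, f y ≤ ∫⁻ y in Ioc x' (x + K * δ), f y :=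
        lintegral_mono_set (Ioc_subset_Ioc hx'δ.le hK)
    _ ≤ (∫⁻ y in Ioc x' x, f y) + ∫⁻ y in Ioc x (x + K * δ), f y := by
        rw [← Ioc_union_Ioc_eq_Ioc hx'x (le_add_of_nonneg_right (by positivity))]
        exact lintegral_union_le f _ _
    _ ≤ ENNReal.ofReal δ * ∑ j ∈ Finset.range (M - K), f (x' + j * δ)
          + ENNReal.ofReal δ * ∑ k ∈ Finset.range K, f (x + k * δ) := by
        gcongr
        · simpa only [hx'end] using lintegral_Ioc_le_sum_of_antitone hf x' hδ.le (M - K)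
        · exact lintegral_Ioc_le_sum_of_antitone hf x hδ.le K
    _ = ENNReal.ofReal δ * ∑ k ∈ Finset.range M, f (cyclicShift t (k * δ) x) := by
        rw [hsum, mul_add, add_comm]

theorem iUnion_Ioc_div_add_one {t : ℝ} (ht : 0 < t) :
    ⋃ n : ℕ, Ioc (t / (n + 1)) t = Ioc 0 t := by
  refine Subset.antisymm (iUnion_subset fun n => Ioc_subset_Ioc_left (by positivity)) ?_
  rintro y ⟨hy0, hyt⟩
  obtain ⟨n, hn⟩ := exists_nat_gt (t / y)
  refine mem_iUnion.2 ⟨n, (div_lt_iff₀ (by positivity)).2 ?_, hyt⟩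
  rw [div_lt_iff₀ hy0] at hn
  linarith

namespace RINorm

variable (X : RINorm)

theorem N_const_mul {c : ℝ≥0∞} (hc : c ≠ ⊤) {f : ℝ → ℝ≥0∞} (hf : Measurable f) :
    X.N (fun x => c * f x) = c * X.N f := by
  simpa only [ENNReal.coe_toNNReal hc] using X.smul_eq f hf c.toNNReal

theorem N_zero : X.N (fun _ => 0) = 0 :=
  (X.eq_zero_iff 0 measurable_const).2 (ae_of_all _ fun _ => rfl)

theorem N_sum_le {ι : Type*} (s : Finset ι) {u : ι → ℝ → ℝ≥0∞} (hu : ∀ i, Measurable (u i)) :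
    X.N (fun x => ∑ i ∈ s, u i x) ≤ ∑ i ∈ s, X.N (u i) := by
  classical
  induction s using Finset.induction_on with
  | empty => simpa using (X.N_zero).le
  | insert i s hi ih =>
    simp only [Finset.sum_insert hi]
    exact (X.add_le _ _ (hu i) (Finset.measurable_sum _ fun j _ => hu j)).trans
      (add_le_add le_rfl ih)

theorem lintegral_ne_top_of_N_ne_top {f : ℝ → ℝ≥0∞} (hf : Measurable f) (h : X.N f ≠ ⊤) :
    ∫⁻ x in Ioo (0:ℝ) 1, f x ≠ ⊤ := by
  obtain ⟨c, -, hc⟩ := X.lintegral_le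
  exact ne_top_of_le_ne_top (mul_ne_top coe_ne_top h) (hc f hf)

theorem N_decRearr {g : ℝ → ℝ≥0∞} (hg : Measurable g) : X.N (decRearr g) = X.N g :=
  X.equimeasurable _ _ (measurable_decRearr g) hg fun lam _ => volume_sep_lt_decRearr g lam

theorem N_comp_cyclicShift {f : ℝ → ℝ≥0∞} (hf : Measurable f) {t s : ℝ} (hs : 0 ≤ s)
    (hst : s ≤ t) (ht : t ≤ 1) : X.N (f ∘ cyclicShift t s) = X.N f := by
  refine X.equimeasurable _ _ (hf.comp (measurable_cyclicShift t s)) hf fun lam _ => ?_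
  have hIoo : ∀ S : Set ℝ, volume {x ∈ Ioo (0:ℝ) 1 | x ∈ S} = volume (Ico 0 1 ∩ S) :=
    fun S => measure_congr (Ioo_ae_eq_Ico.inter (ae_eq_refl S))
  exact (hIoo _).trans <| (volume_Ico_inter_preimage_cyclicShift hs hst ht
    (measurableSet_lt measurable_const hf)).trans (hIoo {x | lam < f x}).symm

theorem N_average_cyclicShift_le {f : ℝ → ℝ≥0∞} (hf : Measurable f) {t δ : ℝ} (n : ℕ)
    (hδ : 0 ≤ δ) (hnδ : ((n + 1 : ℕ) : ℝ) * δ = t) (ht : t ≤ 1) :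
    X.N (fun x => ((n + 1 : ℕ) : ℝ≥0∞)⁻¹
      * ∑ k ∈ Finset.range (n + 1), f (cyclicShift t (k * δ) x)) ≤ X.N f := by
  have hshift_meas : ∀ k : ℕ, Measurable (f ∘ cyclicShift t (k * δ)) :=
    fun k => hf.comp (measurable_cyclicShift t _)
  have hshift_le : ∀ k ∈ Finset.range (n + 1), k * δ ≤ t := fun k hk => by
    rw [← hnδ]
    gcongr
    exact_mod_cast (Finset.mem_range.1 hk).le
  calc _ = ((n + 1 : ℕ) : ℝ≥0∞)⁻¹
        * X.N (fun x => ∑ k ∈ Finset.range (n + 1), (f ∘ cyclicShift t (k * δ)) x) :=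
        X.N_const_mul (by simp) (Finset.measurable_sum _ fun k _ => hshift_meas k)
    _ ≤ ((n + 1 : ℕ) : ℝ≥0∞)⁻¹ * ∑ k ∈ Finset.range (n + 1), X.N (f ∘ cyclicShift t (k * δ)) := by
        gcongr
        exact X.N_sum_le _ hshift_meas
    _ = ((n + 1 : ℕ) : ℝ≥0∞)⁻¹ * ((n + 1 : ℕ) * X.N f) := by
        rw [Finset.sum_congr rfl fun k hk =>
            X.N_comp_cyclicShift hf (by positivity) (hshift_le k hk) ht,
          Finset.sum_const, Finset.card_range, nsmul_eq_mul]
    _ = X.N f := by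
        rw [← mul_assoc, ENNReal.inv_mul_cancel (by simp) (by simp), one_mul]

/-- On `(0, t)` the average of the `n + 1` rotations of `f` by multiples of `t / (n + 1)` dominates
the mean of the antitone `f` over `(t / (n + 1), t)`. -/
theorem truncatedAverage_mul_N_indicator_le {f : ℝ → ℝ≥0∞} (hf : Antitone f)
    (hfm : Measurable f) {t : ℝ} (ht0 : 0 < t) (ht1 : t < 1) (n : ℕ) :
    ((ENNReal.ofReal t)⁻¹ * ∫⁻ y in Ioc (t / (n + 1)) t, f y)
        * X.N ((Ioo (0:ℝ) t).indicator fun _ => 1) ≤ X.N f := by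
  rcases eq_or_ne (X.N f) ⊤ with htop | htop
  · simp [htop]
  set δ := t / (n + 1)
  have hδ : 0 < δ := by positivity
  have hnδ : ((n + 1 : ℕ) : ℝ) * δ = t := by
    simp only [δ]
    push_cast
    field_simp
  set B := (ENNReal.ofReal t)⁻¹ * ∫⁻ y in Ioc δ t, f y
  have hB : B ≠ ⊤ := by
    refine mul_ne_top (inv_ne_top.2 (ENNReal.ofReal_pos.2 ht0).ne') ?_
    refine ne_top_of_le_ne_top (X.lintegral_ne_top_of_N_ne_top hfm htop) (lintegral_mono_set ?_)
    exact Ioc_subset_Ioo hδ.le ht1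
  set c : ℝ≥0∞ := ((n + 1 : ℕ) : ℝ≥0∞)⁻¹
  have hc : (ENNReal.ofReal t)⁻¹ * ENNReal.ofReal δ = c := by
    rw [← hnδ, ENNReal.ofReal_mul (by positivity), ENNReal.ofReal_natCast, ENNReal.mul_inv
      (Or.inl (by simp)) (Or.inl (by simp)), mul_assoc, ENNReal.inv_mul_cancel
      (ENNReal.ofReal_pos.2 hδ).ne' ENNReal.ofReal_ne_top, mul_one]
  set H : ℝ → ℝ≥0∞ := fun x => c * ∑ k ∈ Finset.range (n + 1), f (cyclicShift t (k * δ) x)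
  have hBH : ∀ x, B * (Ioo (0:ℝ) t).indicator (fun _ => 1) x ≤ H x := by
    intro x
    by_cases hx : x ∈ Ioo 0 t
    · rw [indicator_of_mem hx, mul_one]
      change B ≤ c * _
      rw [← hc, mul_assoc]
      exact mul_le_mul_right
        (lintegral_Ioc_le_sum_cyclicShift hf hδ hnδ (Ioo_subset_Ico_self hx)) _
    · simp [indicator_of_notMem hx]
  have hχ : Measurable ((Ioo (0:ℝ) t).indicator fun _ => (1 : ℝ≥0∞)) :=
    measurable_const.indicator measurableSet_Ioo
  have hHm : Measurable H := (Finset.measurable_sum _ fun k _ =>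
    hfm.comp (measurable_cyclicShift t _)).const_mul c
  calc B * X.N ((Ioo (0:ℝ) t).indicator fun _ => 1)
      = X.N (fun x => B * (Ioo (0:ℝ) t).indicator (fun _ => 1) x) := (X.N_const_mul hB hχ).symm
    _ ≤ X.N H := X.mono _ _ (hχ.const_mul B) hHm (ae_of_all _ hBH)
    _ ≤ X.N f := X.N_average_cyclicShift_le hfm n hδ.le hnδ ht1.le

theorem average_mul_N_indicator_le {f : ℝ → ℝ≥0∞} (hf : Antitone f)
    (hfm : Measurable f) {t : ℝ} (ht0 : 0 < t) (ht1 : t < 1) :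
    ((ENNReal.ofReal t)⁻¹ * ∫⁻ s in Ioo (0:ℝ) t, f s)
        * X.N ((Ioo (0:ℝ) t).indicator fun _ => 1) ≤ X.N f := by
  have hmono : Monotone fun n : ℕ => Ioc (t / (n + 1)) t := fun m n hmn =>
    Ioc_subset_Ioc_left (div_le_div_of_nonneg_left ht0.le (by positivity) (by gcongr))
  rw [setLIntegral_congr Ioo_ae_eq_Ioc, ← iUnion_Ioc_div_add_one ht0,
    setLIntegral_iUnion_of_directed _ hmono.directed_le, ENNReal.mul_iSup, ENNReal.iSup_mul]
  exact iSup_le fun n => X.truncatedAverage_mul_N_indicator_le hf hfm ht0 ht1 n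

end RINorm

theorem fundamental_estimate_implies_marcinkiewicz_general (m : ℕ) (hm : 2 ≤ m) (I : ℝ → ℝ)
    (X : RINorm) (C : ℝ≥0) (hC : 0 < C)
    (hfund : ∀ t ∈ Set.Ioo (0:ℝ) 1,
      (∫⁻ s in Set.Ioo (0:ℝ) t, (ENNReal.ofReal (I s))⁻¹) ^ m
        ≤ (C : ℝ≥0∞) * X.N ((Set.Ioo (0:ℝ) t).indicator fun _ => 1)) :
    (∫⁻ s in Set.Ioo (0:ℝ) 1, (ENNReal.ofReal (I s))⁻¹) < ⊤ ∧
    ∃ C' : ℝ≥0, 0 < C' ∧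
      ∀ g : ℝ → ℝ≥0∞, Measurable g → ∀ t ∈ Set.Ioo (0:ℝ) 1,
        ((ENNReal.ofReal t)⁻¹ * ∫⁻ s in Set.Ioo (0:ℝ) t, decRearr g s) *
            (∫⁻ s in Set.Ioo (0:ℝ) t, (ENNReal.ofReal (I s))⁻¹) ^ m
          ≤ (C' : ℝ≥0∞) * X.N g := by
  have hm0 : (0 : ℝ) < m := by exact_mod_cast (by omega : 0 < m)
  have hpartial : ∀ t ∈ Ioo (0:ℝ) 1, ∫⁻ s in Ioo (0:ℝ) t, (ENNReal.ofReal (I s))⁻¹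
      ≤ ((C : ℝ≥0∞) * X.N ((Ioo (0:ℝ) 1).indicator fun _ => 1)) ^ (m : ℝ)⁻¹ := by
    intro t ht
    rw [ENNReal.le_rpow_inv_iff hm0, ENNReal.rpow_natCast]
    refine (hfund t ht).trans (mul_le_mul_right (X.mono _ _ ?_ ?_ (ae_of_all _ fun x => ?_)) _)
    · exact measurable_const.indicator measurableSet_Ioo
    · exact measurable_const.indicator measurableSet_Ioo
    · exact indicator_le_indicator_of_subset (Ioo_subset_Ioo_right ht.2.le) (fun _ => zero_le) x
  refine ⟨(setLIntegral_Ioo_le_of_forall_lt hpartial).trans_lt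
    (ENNReal.rpow_lt_top_of_nonneg (by positivity) (mul_ne_top coe_ne_top X.chi_lt_top.ne)),
    C, hC, fun g hg t ht => ?_⟩
  calc ((ENNReal.ofReal t)⁻¹ * ∫⁻ s in Ioo (0:ℝ) t, decRearr g s)
        * (∫⁻ s in Ioo (0:ℝ) t, (ENNReal.ofReal (I s))⁻¹) ^ m
      ≤ ((ENNReal.ofReal t)⁻¹ * ∫⁻ s in Ioo (0:ℝ) t, decRearr g s)
        * ((C : ℝ≥0∞) * X.N ((Ioo (0:ℝ) t).indicator fun _ => 1)) :=
        mul_le_mul_right (hfund t ht) _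
    _ = C * (((ENNReal.ofReal t)⁻¹ * ∫⁻ s in Ioo (0:ℝ) t, decRearr g s)
        * X.N ((Ioo (0:ℝ) t).indicator fun _ => 1)) := by ring
    _ ≤ C * X.N g := by
        rw [← X.N_decRearr hg]
        exact mul_le_mul_right (X.average_mul_N_indicator_le (decRearr_antitone g)
          (measurable_decRearr g) ht.1 ht.2) _

/-- if `(∫_0^t ds/I(s))^m ≤ C N(χ_(0,t))`, then `∫_0^1 ds/I(s) < ∞` and
`sup_t g**(t) (∫_0^t ds/I(s))^m ≤ C' N(g)` for every measurable `g`. -/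
theorem fundamental_estimate_implies_marcinkiewicz (m : ℕ) (hm : 2 ≤ m) (I : ℝ → ℝ)
    (hIpos : ∀ t ∈ Set.Ioo (0:ℝ) 1, 0 < I t)
    (hImono : MonotoneOn I (Set.Ioo (0:ℝ) 1))
    (X : RINorm) (C : ℝ≥0) (hC : 0 < C)
    (hfund : ∀ t ∈ Set.Ioo (0:ℝ) 1,
      (∫⁻ s in Set.Ioo (0:ℝ) t, (ENNReal.ofReal (I s))⁻¹) ^ m
        ≤ (C : ℝ≥0∞) * X.N ((Set.Ioo (0:ℝ) t).indicator fun _ => 1)) :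
    (∫⁻ s in Set.Ioo (0:ℝ) 1, (ENNReal.ofReal (I s))⁻¹) < ⊤ ∧
    ∃ C' : ℝ≥0, 0 < C' ∧
      ∀ g : ℝ → ℝ≥0∞, Measurable g → ∀ t ∈ Set.Ioo (0:ℝ) 1,
        ((ENNReal.ofReal t)⁻¹ * ∫⁻ s in Set.Ioo (0:ℝ) t, decRearr g s) *
            (∫⁻ s in Set.Ioo (0:ℝ) t, (ENNReal.ofReal (I s))⁻¹) ^ m
          ≤ (C' : ℝ≥0∞) * X.N g :=
  fundamental_estimate_implies_marcinkiewicz_general m hm I X C hC hfund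
end

section
/- Let m ∈ ℕ, m ≥ 1, let I be a positive nondecreasing function on (0,1), and let N be a rearrangement-invariant function norm on (0,1) with associate functional N'. Suppose there exists a constant C > 0 such that N(g · H_I^m f) ≤ C · N(f) · N(g) for all nonnegative measurable functions f, g on (0,1). Then N'(h_m) ≤ (m−1)! · C, where h_m(t) = (1/I(t)) (∫_0^t ds/I(s))^{m−1} for t ∈ (0,1). -/
open MeasureTheory ENNReal NNReal

/-- The associate functional `N'(g) = sup { ∫_0^1 f g : f ≥ 0 measurable, N(f) ≤ 1 }`. -/
noncomputable def assocN (X : RINorm) (g : ℝ → ℝ≥0∞) : ℝ≥0∞ :=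
  ⨆ (f : ℝ → ℝ≥0∞) (_ : Measurable f ∧ X.N f ≤ 1),
    ∫⁻ s in Set.Ioo (0:ℝ) 1, f s * g s

/-!
Let `ν` be the measure with density `1 / I` on `(0,1)`, so that `H_I g (t) = ∫_{(t,∞)} g dν`
for `t ≥ 0`. Testing the product inequality against `g = χ_(0,t)` and using that `H_I^m f` is
nonincreasing gives `H_I^m f ≤ C` on `(0,1)` when `N(f) ≤ 1`, and hence at `0` by monotone
convergence. On the other hand, `ν(t,s)^(k+1) ≤ (k+1) ∫_t^s ν(r,s)^k dν(r)`, because every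
point of `(t,s)^(k+1)` has a smallest coordinate and `ν` has no atoms; iterating this with
Fubini gives `∫_{(t,∞)} f(s) ν(t,s)^k dν(s) ≤ k! H_I^(k+1) f (t)`. At `t = 0` the left-hand side
is `∫_0^1 f h_m` for `k = m - 1`.
-/

open Set

noncomputable def tailLIntegral {α : Type*} [Preorder α] [MeasurableSpace α] (ν : Measure α)
    (g : α → ℝ≥0∞) (t : α) : ℝ≥0∞ :=
  ∫⁻ s in Ioi t, g s ∂ν

section LinearOrder

variable {α : Type*} [LinearOrder α] [TopologicalSpace α] [OrderClosedTopology α]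
  [SecondCountableTopology α] [MeasurableSpace α] [OpensMeasurableSpace α]

theorem measure_pi_setOf_forall_le (ν : Measure α) [SigmaFinite ν] {k : ℕ} (i : Fin (k + 1)) :
    Measure.pi (fun _ => ν) {x : Fin (k + 1) → α | ∀ j, x i ≤ x j} =
      ∫⁻ r, ν (Ici r) ^ k ∂ν := by
  set T : Set (α × (Fin k → α)) := {p | ∀ j, p.1 ≤ p.2 j}
  have hT : MeasurableSet T := by
    simp only [T, ofPred_forall]
    exact .iInter fun j =>
      measurableSet_le measurable_fst ((measurable_pi_apply j).comp measurable_snd)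
  have hpre : {x : Fin (k + 1) → α | ∀ j, x i ≤ x j} =
      MeasurableEquiv.piFinSuccAbove (fun _ => α) i ⁻¹' T := by
    ext x
    simp only [T, mem_ofPred_eq, mem_preimage, MeasurableEquiv.piFinSuccAbove_apply]
    exact ⟨fun h j => h _, fun h j => Fin.succAboveCases i le_rfl h j⟩
  have hslice (r : α) : Prod.mk r ⁻¹' T = univ.pi fun _ => Ici r := by
    ext y; simp only [T, mem_preimage, mem_ofPred_eq, mem_univ_pi, mem_Ici]
  rw [hpre, (measurePreserving_piFinSuccAbove (fun _ => ν) i).measure_preimage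
    hT.nullMeasurableSet, Measure.prod_apply hT]
  simp only [hslice, Measure.pi_pi, Finset.prod_const, Finset.card_univ, Fintype.card_fin]

theorem measure_univ_pow_le_mul_lintegral_measure_Ici (ν : Measure α) [SigmaFinite ν] (k : ℕ) :
    ν univ ^ (k + 1) ≤ (k + 1 : ℕ) * ∫⁻ r, ν (Ici r) ^ k ∂ν := by
  have hcover : (univ : Set (Fin (k + 1) → α)) ⊆ ⋃ i, {x | ∀ j, x i ≤ x j} := fun x _ => by
    obtain ⟨i, -, hi⟩ := Finset.exists_min_image Finset.univ x Finset.univ_nonempty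
    exact mem_iUnion.2 ⟨i, fun j => hi j (Finset.mem_univ j)⟩
  calc ν univ ^ (k + 1) = Measure.pi (fun _ : Fin (k + 1) => ν) univ := by
        simp [Measure.pi_univ]
    _ ≤ ∑ i, Measure.pi (fun _ : Fin (k + 1) => ν) {x | ∀ j, x i ≤ x j} :=
        (measure_mono hcover).trans (measure_iUnion_fintype_le _ _)
    _ = (k + 1 : ℕ) * ∫⁻ r, ν (Ici r) ^ k ∂ν := by
        simp [measure_pi_setOf_forall_le]

theorem measure_Ioo_pow_le_mul_setLIntegral (ν : Measure α) [SigmaFinite ν]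
    [NullSingletonClass ν] (k : ℕ) (t s : α) :
    ν (Ioo t s) ^ (k + 1) ≤ (k + 1 : ℕ) * ∫⁻ r in Ioo t s, ν (Ioo r s) ^ k ∂ν := by
  have h := measure_univ_pow_le_mul_lintegral_measure_Ici (ν.restrict (Ioo t s)) k
  rw [Measure.restrict_apply_univ] at h
  refine h.trans_eq (congrArg _ (setLIntegral_congr_fun measurableSet_Ioo fun r hr => ?_))
  have hinter : Ici r ∩ Ioo t s = Ico r s := by
    ext x
    simp only [mem_inter_iff, mem_Ici, mem_Ioo, mem_Ico]
    exact ⟨fun h => ⟨h.1, h.2.2⟩, fun h => ⟨h.1, hr.1.trans_le h.1, h.2⟩⟩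
  rw [Measure.restrict_apply measurableSet_Ici, hinter, measure_congr (Ioo_ae_eq_Ico (μ := ν))]

theorem measurable_measure_Ioo (ν : Measure α) [SFinite ν] :
    Measurable fun p : α × α => ν (Ioo p.1 p.2) :=
  measurable_measure_prodMk_left (s := {q : (α × α) × α | q.1.1 < q.2 ∧ q.2 < q.1.2})
    ((measurableSet_lt (measurable_fst.comp measurable_fst) measurable_snd).inter
      (measurableSet_lt measurable_snd (measurable_snd.comp measurable_fst)))

theorem lintegral_lintegral_Iio_swap (μ : Measure α) [SFinite μ] {F : α × α → ℝ≥0∞}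
    (hF : Measurable F) :
    ∫⁻ s, ∫⁻ r in Iio s, F (r, s) ∂μ ∂μ = ∫⁻ r, ∫⁻ s in Ioi r, F (r, s) ∂μ ∂μ := by
  set G := {p : α × α | p.1 < p.2}.indicator F
  have hG : Measurable G := hF.indicator (measurableSet_lt measurable_fst measurable_snd)
  calc ∫⁻ s, ∫⁻ r in Iio s, F (r, s) ∂μ ∂μ = ∫⁻ s, ∫⁻ r, G (r, s) ∂μ ∂μ := by
        simp_rw [← lintegral_indicator measurableSet_Iio]; rfl
    _ = ∫⁻ r, ∫⁻ s, G (r, s) ∂μ ∂μ :=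
        lintegral_lintegral_swap (hG.comp measurable_swap).aemeasurable
    _ = ∫⁻ r, ∫⁻ s in Ioi r, F (r, s) ∂μ ∂μ := by
        simp_rw [← lintegral_indicator measurableSet_Ioi]; rfl

theorem setLIntegral_Ioi_lintegral_Ioo_swap (ν : Measure α) [SFinite ν] {F : α × α → ℝ≥0∞}
    (hF : Measurable F) (t : α) :
    ∫⁻ s in Ioi t, ∫⁻ r in Ioo t s, F (r, s) ∂ν ∂ν =
      ∫⁻ r in Ioi t, ∫⁻ s in Ioi r, F (r, s) ∂ν ∂ν := by
  have h := lintegral_lintegral_Iio_swap (ν.restrict (Ioi t)) hF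
  simp only [Measure.restrict_restrict measurableSet_Iio,
    Measure.restrict_restrict measurableSet_Ioi, Iio_inter_Ioi] at h
  rw [h]
  refine setLIntegral_congr_fun measurableSet_Ioi fun r hr => ?_
  rw [Ioi_inter_Ioi, max_eq_left (le_of_lt hr)]

theorem setLIntegral_Ioi_mul_measure_Ioo_pow_le (ν : Measure α) [SigmaFinite ν]
    [NullSingletonClass ν] {g : α → ℝ≥0∞} (hg : Measurable g) (k : ℕ) (t : α) :
    ∫⁻ s in Ioi t, g s * ν (Ioo t s) ^ k ∂ν ≤ k.factorial * (tailLIntegral ν)^[k + 1] g t := by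
  induction k generalizing t with
  | zero => simp [tailLIntegral]
  | succ k ih =>
    have hκ := measurable_measure_Ioo ν
    have hF : Measurable fun p : α × α => g p.2 * ν (Ioo p.1 p.2) ^ k :=
      (hg.comp measurable_snd).mul (hκ.pow_const k)
    calc ∫⁻ s in Ioi t, g s * ν (Ioo t s) ^ (k + 1) ∂ν
        ≤ ∫⁻ s in Ioi t, (k + 1 : ℕ) * ∫⁻ r in Ioo t s, g s * ν (Ioo r s) ^ k ∂ν ∂ν := by
          refine lintegral_mono fun s => ?_
          have hκs : Measurable fun r => ν (Ioo r s) ^ k :=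
            (hκ.comp (measurable_id.prodMk measurable_const)).pow_const k
          rw [lintegral_const_mul (g s) hκs, mul_left_comm]
          gcongr; exact measure_Ioo_pow_le_mul_setLIntegral ν k t s
      _ = (k + 1 : ℕ) * ∫⁻ r in Ioi t, ∫⁻ s in Ioi r, g s * ν (Ioo r s) ^ k ∂ν ∂ν := by
          rw [lintegral_const_mul' _ _ (natCast_ne_top _),
            setLIntegral_Ioi_lintegral_Ioo_swap ν hF]
      _ ≤ (k + 1 : ℕ) * ∫⁻ r in Ioi t, k.factorial * (tailLIntegral ν)^[k + 1] g r ∂ν := by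
          gcongr with r
          exact ih r
      _ = (k + 1).factorial * (tailLIntegral ν)^[k + 1 + 1] g t := by
          rw [lintegral_const_mul' _ _ (natCast_ne_top _), ← mul_assoc, ← Nat.cast_mul,
            ← Nat.factorial_succ, Function.iterate_succ_apply' _ (k + 1)]
          rfl

end LinearOrder

theorem tailLIntegral_le_of_forall_mem_Ioo (ν : Measure ℝ) (g : ℝ → ℝ≥0∞) {a b : ℝ} {c : ℝ≥0∞}
    (hab : a < b) (h : ∀ t ∈ Ioo a b, tailLIntegral ν g t ≤ c) : tailLIntegral ν g a ≤ c := by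
  obtain ⟨u, hu_anti, hu_mem, hu_lim⟩ := exists_seq_strictAnti_tendsto' hab
  have hunion : ⋃ n, Ioi (u n) = Ioi a :=
    (isGLB_of_tendsto_atTop hu_anti.antitone hu_lim).iUnion_Ioi_eq
  rw [tailLIntegral, ← hunion, setLIntegral_iUnion_of_directed _
    (Monotone.directed_le fun m n hmn => Ioi_subset_Ioi (hu_anti.antitone hmn))]
  exact iSup_le fun n => h (u n) (hu_mem n)

namespace RINorm

variable (X : RINorm)

theorem N_indicator_Ioo_ne_zero {t : ℝ} (ht : 0 < t) :
    X.N ((Ioo 0 t).indicator fun _ => 1) ≠ 0 := by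
  rw [Ne, X.eq_zero_iff _ (measurable_const.indicator measurableSet_Ioo), ae_iff,
    Measure.restrict_apply' measurableSet_Ioo]
  have hset : {s : ℝ | ¬ (Ioo 0 t).indicator (fun _ => (1 : ℝ≥0∞)) s = 0} ∩ Ioo 0 1 =
      Ioo 0 (min t 1) := by
    ext s
    simp only [mem_inter_iff, mem_ofPred_eq, indicator_apply_eq_zero, one_ne_zero, imp_false,
      not_not, mem_Ioo, lt_min_iff]
    grind
  rw [hset, Real.volume_Ioo, sub_zero, ENNReal.ofReal_eq_zero, not_le]
  exact lt_min ht one_pos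

theorem N_indicator_Ioo_ne_top (t : ℝ) : X.N ((Ioo 0 t).indicator fun _ => 1) ≠ ⊤ := by
  refine ne_top_of_le_ne_top X.chi_lt_top.ne (X.mono _ _ (measurable_const.indicator
    measurableSet_Ioo) (measurable_const.indicator measurableSet_Ioo) ?_)
  refine ae_restrict_of_forall_mem measurableSet_Ioo fun s hs => ?_
  rw [indicator_of_mem hs]
  exact indicator_le_self' (fun _ _ => zero_le) s

theorem le_of_N_mul_le {F : ℝ → ℝ≥0∞} (hF : Antitone F) {C : ℝ≥0∞}
    (h : ∀ g, Measurable g → X.N (fun s => g s * F s) ≤ C * X.N g) {t : ℝ} (ht : 0 < t) :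
    F t ≤ C := by
  set χ : ℝ → ℝ≥0∞ := (Ioo 0 t).indicator fun _ => 1
  have hχ : Measurable χ := measurable_const.indicator measurableSet_Ioo
  refine ENNReal.le_of_forall_nnreal_lt fun c hc => ?_
  have hcχ : ∀ s, c * χ s ≤ χ s * F s := fun s => by
    by_cases hs : s ∈ Ioo 0 t
    · simp only [χ, indicator_of_mem hs, mul_one, one_mul]
      exact hc.le.trans (hF hs.2.le)
    · simp [χ, indicator_of_notMem hs]
  have hle : c * X.N χ ≤ C * X.N χ := by
    rw [← X.smul_eq χ hχ c]
    exact (X.mono _ _ (hχ.const_mul _) (hχ.mul hF.measurable) (ae_of_all _ hcχ)).trans (h χ hχ)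
  exact (ENNReal.mul_le_mul_iff_left (X.N_indicator_Ioo_ne_zero ht)
    (X.N_indicator_Ioo_ne_top t)).1 hle

end RINorm

theorem antitone_HI (I : ℝ → ℝ) (g : ℝ → ℝ≥0∞) : Antitone (HI I g) :=
  fun _ _ hab => lintegral_mono_set (Ioo_subset_Ioo_left hab)

noncomputable def hardyMeasure (I : ℝ → ℝ) : Measure ℝ :=
  (volume.restrict (Ioo 0 1)).withDensity fun r => (ENNReal.ofReal (I r))⁻¹

namespace hardyMeasure

variable {I : ℝ → ℝ}

instance : NullSingletonClass (hardyMeasure I) := by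
  unfold hardyMeasure; infer_instance

theorem sigmaFinite (hIpos : ∀ t ∈ Ioo (0:ℝ) 1, 0 < I t) : SigmaFinite (hardyMeasure I) :=
  SigmaFinite.withDensity_of_ne_top <| ae_restrict_of_forall_mem measurableSet_Ioo fun r hr =>
    ENNReal.inv_ne_top.2 (ENNReal.ofReal_pos.2 (hIpos r hr)).ne'

theorem apply_Ioo {a b : ℝ} (ha : 0 ≤ a) (hb : b ≤ 1) :
    hardyMeasure I (Ioo a b) = ∫⁻ u in Ioo a b, (ENNReal.ofReal (I u))⁻¹ := by
  rw [hardyMeasure, withDensity_apply _ measurableSet_Ioo,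
    Measure.restrict_restrict measurableSet_Ioo, inter_eq_left.2 (Ioo_subset_Ioo ha hb)]

theorem setLIntegral_Ioi (hIpos : ∀ t ∈ Ioo (0:ℝ) 1, 0 < I t)
    (hImono : MonotoneOn I (Ioo (0:ℝ) 1)) (g : ℝ → ℝ≥0∞) {t : ℝ} (ht : 0 ≤ t) :
    ∫⁻ s in Ioi t, g s ∂hardyMeasure I = ∫⁻ s in Ioo t 1, g s / ENNReal.ofReal (I s) := by
  have hW : AEMeasurable (fun r => (ENNReal.ofReal (I r))⁻¹) (volume.restrict (Ioo 0 1)) :=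
    aemeasurable_restrict_of_antitoneOn measurableSet_Ioo fun x hx y hy hxy =>
      ENNReal.inv_le_inv.2 (ENNReal.ofReal_le_ofReal (hImono hx hy hxy))
  have hWfin : ∀ᵐ r ∂volume.restrict (Ioo 0 1), (ENNReal.ofReal (I r))⁻¹ < ∞ :=
    ae_restrict_of_forall_mem measurableSet_Ioo fun r hr =>
      ENNReal.inv_lt_top.2 (ENNReal.ofReal_pos.2 (hIpos r hr))
  rw [hardyMeasure, setLIntegral_withDensity_eq_setLIntegral_mul_non_measurable₀ _ hW.restrict g
    measurableSet_Ioi (ae_restrict_of_ae hWfin), Measure.restrict_restrict measurableSet_Ioi,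
    Ioi_inter_Ioo, max_eq_left ht]
  simp only [Pi.mul_apply, div_eq_mul_inv, mul_comm]

theorem iterate_HI_eq (hIpos : ∀ t ∈ Ioo (0:ℝ) 1, 0 < I t)
    (hImono : MonotoneOn I (Ioo (0:ℝ) 1)) (k : ℕ) (g : ℝ → ℝ≥0∞) {t : ℝ} (ht : 0 ≤ t) :
    (HI I)^[k] g t = (tailLIntegral (hardyMeasure I))^[k] g t := by
  induction k generalizing t with
  | zero => rw [Function.iterate_zero_apply, Function.iterate_zero_apply]
  | succ k ih =>
    rw [Function.iterate_succ_apply', Function.iterate_succ_apply', tailLIntegral,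
      setLIntegral_Ioi hIpos hImono _ ht]
    refine setLIntegral_congr_fun measurableSet_Ioo fun r hr => ?_
    rw [ih (ht.trans hr.1.le)]

end hardyMeasure

theorem assoc_norm_bound_of_product_inequality_general (m : ℕ) (hm : 1 ≤ m) (I : ℝ → ℝ)
    (hIpos : ∀ t ∈ Set.Ioo (0:ℝ) 1, 0 < I t)
    (hImono : MonotoneOn I (Set.Ioo (0:ℝ) 1))
    (X : RINorm) (C : ℝ≥0)
    (hprod : ∀ f g : ℝ → ℝ≥0∞, Measurable f → Measurable g →
      X.N (fun t => g t * (HI I)^[m] f t) ≤ (C : ℝ≥0∞) * X.N f * X.N g) :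
    assocN X (fun t => (ENNReal.ofReal (I t))⁻¹ *
        (∫⁻ s in Set.Ioo (0:ℝ) t, (ENNReal.ofReal (I s))⁻¹) ^ (m - 1))
      ≤ ((m - 1).factorial : ℝ≥0∞) * (C : ℝ≥0∞) := by
  obtain ⟨n, rfl⟩ : ∃ n, m = n + 1 := ⟨m - 1, by omega⟩
  have := hardyMeasure.sigmaFinite hIpos
  rw [Nat.add_sub_cancel]
  refine iSup₂_le fun f ⟨hf, hf1⟩ => ?_
  have hbound : ∀ t ∈ Ioo (0:ℝ) 1,
      tailLIntegral (hardyMeasure I) ((tailLIntegral (hardyMeasure I))^[n] f) t ≤ C := by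
    intro t ht
    rw [← Function.iterate_succ_apply' (tailLIntegral _),
      ← hardyMeasure.iterate_HI_eq hIpos hImono _ _ ht.1.le]
    refine X.le_of_N_mul_le (Function.iterate_succ_apply' (HI I) n f ▸ antitone_HI _ _)
      (fun g hg => (hprod f g hf hg).trans ?_) ht.1
    gcongr
    exact mul_le_of_le_one_right' hf1
  calc ∫⁻ s in Ioo 0 1, f s * ((ENNReal.ofReal (I s))⁻¹ *
        (∫⁻ u in Ioo 0 s, (ENNReal.ofReal (I u))⁻¹) ^ n)
      = ∫⁻ s in Ioi 0, f s * hardyMeasure I (Ioo 0 s) ^ n ∂hardyMeasure I := by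
        rw [hardyMeasure.setLIntegral_Ioi hIpos hImono _ le_rfl]
        refine setLIntegral_congr_fun measurableSet_Ioo fun s hs => ?_
        rw [hardyMeasure.apply_Ioo le_rfl hs.2.le, div_eq_mul_inv]
        ring
    _ ≤ n.factorial * (tailLIntegral (hardyMeasure I))^[n + 1] f 0 :=
        setLIntegral_Ioi_mul_measure_Ioo_pow_le _ hf n 0
    _ ≤ n.factorial * C := by
        rw [Function.iterate_succ_apply']
        gcongr
        exact tailLIntegral_le_of_forall_mem_Ioo _ _ zero_lt_one hbound

/-- if `N(g ⬝ H_I^m f) ≤ C N(f) N(g)` for all nonnegative measurable `f, g`,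
then the associate norm of `h_m(t) = (1/I(t)) (∫_0^t ds/I(s))^{m-1}` is at most `(m-1)! C`. -/
theorem assoc_norm_bound_of_product_inequality (m : ℕ) (hm : 1 ≤ m) (I : ℝ → ℝ)
    (hIpos : ∀ t ∈ Set.Ioo (0:ℝ) 1, 0 < I t)
    (hImono : MonotoneOn I (Set.Ioo (0:ℝ) 1))
    (X : RINorm) (C : ℝ≥0) (hC : 0 < C)
    (hprod : ∀ f g : ℝ → ℝ≥0∞, Measurable f → Measurable g →
      X.N (fun t => g t * (HI I)^[m] f t) ≤ (C : ℝ≥0∞) * X.N f * X.N g) :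
    assocN X (fun t => (ENNReal.ofReal (I t))⁻¹ *
        (∫⁻ s in Set.Ioo (0:ℝ) t, (ENNReal.ofReal (I s))⁻¹) ^ (m - 1))
      ≤ ((m - 1).factorial : ℝ≥0∞) * (C : ℝ≥0∞) :=
  assoc_norm_bound_of_product_inequality_general m hm I hIpos hImono X C hprod
end
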